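/- Let (x,λ) be a solution of (PD-AVD) and let (x*,λ*) be a primal-dual optimal solution. Then the following three integral bounds hold: β·∫_{t₀}^∞ t‖Ax(t) − b‖² dt ≤ 2·E_{x*,λ*}(t₀)/θ; (1 − 2θ)·∫_{t₀}^∞ t·(L(x(t),λ*) − L(x*,λ(t))) dt ≤ E_{x*,λ*}(t₀)/θ; and ξ·∫_{t₀}^∞ t‖(ẋ(t), λ̇(t))‖² dt ≤ E_{x*,λ*}(t₀)/θ; in particular each of these three integrals, multiplied by its respective nonnegative coefficient, is finite. -/

import Mathlib

/-!
The energy `E = E_{x*,λ*}` is a nonnegative Lyapunov function. Substituting the two equations of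
(PD-AVD) into `dE/dt`, all terms cancel except
`θ t (f x + ⟪∇f x, x* − x⟫ − f x*) − θ t D(t)` with
`D = (1 − 2θ)(L(x,λ*) − L(x*,λ)) + (1 − θ)β‖Ax − b‖² + ξ‖(ẋ,λ̇)‖²`;
the first term is `≤ 0` by convexity. Hence `θ ∫_{t₀}^T t D(t) dt ≤ E(t₀) − E(T) ≤ E(t₀)`,
and each of the three summands of `D` is nonnegative (the Lagrangian gap by optimality of
`(x*,λ*)`), with `(1 − θ)β ≥ β/2` since `θ ≤ 1/2`.
-/

open Set MeasureTheory Filter Topology Asymptotics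
open scoped RealInnerProductSpace ENNReal

/-- The augmented Lagrangian `L_β(x,λ) = f(x) + ⟪λ, Ax − b⟫ + (β/2)‖Ax − b‖²`. -/
noncomputable def augLagrangian {X Y : Type*}
    [NormedAddCommGroup X] [InnerProductSpace ℝ X]
    [NormedAddCommGroup Y] [InnerProductSpace ℝ Y]
    (f : X → ℝ) (A : X →L[ℝ] Y) (b : Y) (β : ℝ) (u : X) (μ : Y) : ℝ :=
  f u + ⟪μ, A u - b⟫ + β / 2 * ‖A u - b‖ ^ 2

/-- The energy function `E_{z,μ}(t)` associated to a trajectory `(x,λ)` with velocities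
`(x',λ')`, where the product norm on `X × Y` is the Hilbert norm
`‖(u,v)‖² = ‖u‖² + ‖v‖²` and `ξ = θα − θ − 1`. -/
noncomputable def pdEnergy {X Y : Type*}
    [NormedAddCommGroup X] [InnerProductSpace ℝ X]
    [NormedAddCommGroup Y] [InnerProductSpace ℝ Y]
    (f : X → ℝ) (A : X →L[ℝ] Y) (b : Y) (α β θ : ℝ)
    (x : ℝ → X) (x' : ℝ → X) (l : ℝ → Y) (l' : ℝ → Y)
    (z : X) (μ : Y) (t : ℝ) : ℝ :=
  θ ^ 2 * t ^ 2 *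
      (augLagrangian f A b β (x t) μ - augLagrangian f A b β z (l t))
    + 1 / 2 * (‖x t - z + (θ * t) • x' t‖ ^ 2 + ‖l t - μ + (θ * t) • l' t‖ ^ 2)
    + (θ * α - θ - 1) / 2 * (‖x t - z‖ ^ 2 + ‖l t - μ‖ ^ 2)

theorem HasGradientAt.comp_hasDerivAt {X : Type*} [NormedAddCommGroup X]
    [InnerProductSpace ℝ X] [CompleteSpace X] {f : X → ℝ} {g : X} {γ : ℝ → X} {v : X} {t : ℝ}
    (hf : HasGradientAt f g (γ t)) (hγ : HasDerivAt γ v t) :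
    HasDerivAt (fun s => f (γ s)) ⟪g, v⟫ t := by
  have h : HasDerivAt (f ∘ γ) ⟪g, v⟫ t := by simpa using hf.hasFDerivAt.comp_hasDerivAt t hγ
  exact h

theorem ConvexOn.add_inner_le_of_hasGradientAt {X : Type*} [NormedAddCommGroup X]
    [InnerProductSpace ℝ X] [CompleteSpace X] {f : X → ℝ} {g u : X}
    (hf : ConvexOn ℝ univ f) (hg : HasGradientAt f g u) (y : X) :
    f u + ⟪g, y - u⟫ ≤ f y := by
  have hline : ConvexOn ℝ univ (fun s : ℝ => f (AffineMap.lineMap u y s)) :=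
    hf.comp_affineMap (AffineMap.lineMap u y)
  have hderiv : HasDerivAt (fun s : ℝ => f (AffineMap.lineMap u y s)) ⟪g, y - u⟫ 0 :=
    (by simpa using hg : HasGradientAt f g (AffineMap.lineMap u y (0 : ℝ))).comp_hasDerivAt
      AffineMap.hasDerivAt_lineMap
  have hslope := hline.le_slope_of_hasDerivAt (mem_univ 0) (mem_univ 1) zero_lt_one hderiv
  simp only [slope_def_field, AffineMap.lineMap_apply_one, AffineMap.lineMap_apply_zero,
    sub_zero, div_one] at hslope
  linarith

theorem lintegral_Ioi_le_of_forall_intervalIntegral_le {g : ℝ → ℝ} {t₀ K : ℝ}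
    (hg : ContinuousOn g (Ici t₀)) (hg0 : ∀ t ∈ Ici t₀, 0 ≤ g t)
    (hK : ∀ T, t₀ ≤ T → ∫ t in t₀..T, g t ≤ K) :
    ∫⁻ t in Ioi t₀, ENNReal.ofReal (g t) ≤ ENNReal.ofReal K := by
  have hcover : AECover (volume.restrict (Ioi t₀)) atTop (fun n : ℕ => Iic (t₀ + n)) :=
    aecover_Iic (tendsto_atTop_add_const_left _ _ tendsto_natCast_atTop_atTop)
  have hmeas : AEMeasurable (fun t => ENNReal.ofReal (g t)) (volume.restrict (Ioi t₀)) :=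
    ENNReal.measurable_ofReal.comp_aemeasurable
      ((hg.mono Ioi_subset_Ici_self).aemeasurable measurableSet_Ioi)
  refine le_of_tendsto (hcover.lintegral_tendsto_of_countably_generated hmeas)
    (Eventually.of_forall fun n => ?_)
  have hT : t₀ ≤ t₀ + n := le_add_of_nonneg_right n.cast_nonneg
  rw [Measure.restrict_restrict measurableSet_Iic, Iic_inter_Ioi,
    ← ofReal_integral_eq_lintegral_ofReal
      ((hg.mono Icc_subset_Ici_self).integrableOn_Icc.mono_set Ioc_subset_Icc_self)
      ((ae_restrict_mem measurableSet_Ioc).mono fun t ht => hg0 t ht.1.le),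
    ← intervalIntegral.integral_of_le hT]
  exact ENNReal.ofReal_le_ofReal (hK _ hT)

theorem lintegral_Ioi_le_of_deriv_le_neg {E g : ℝ → ℝ} {t₀ c : ℝ} (hc : 0 < c)
    (hE : ∀ t ∈ Ici t₀, DifferentiableAt ℝ E t) (hE0 : ∀ t ∈ Ici t₀, 0 ≤ E t)
    (hg : ContinuousOn g (Ici t₀)) (hg0 : ∀ t ∈ Ici t₀, 0 ≤ g t)
    (hgE : ∀ t ∈ Ioi t₀, c * g t ≤ -deriv E t) :
    ∫⁻ t in Ioi t₀, ENNReal.ofReal (g t) ≤ ENNReal.ofReal (E t₀ / c) := by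
  refine lintegral_Ioi_le_of_forall_intervalIntegral_le hg hg0 fun T hT => ?_
  have hsub : Icc t₀ T ⊆ Ici t₀ := Icc_subset_Ici_self
  have hdecay : ∫ t in t₀..T, c * g t ≤ -E T - -E t₀ :=
    intervalIntegral.integral_le_sub_of_hasDeriv_right_of_le hT
      (fun t ht => (hE t (hsub ht)).continuousAt.continuousWithinAt.neg)
      (fun t ht => (hE t (hsub (Ioo_subset_Icc_self ht))).hasDerivAt.neg.hasDerivWithinAt)
      ((continuousOn_const.mul (hg.mono hsub)).integrableOn_Icc)
      (fun t ht => hgE t ht.1)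
  rw [intervalIntegral.integral_const_mul] at hdecay
  rw [le_div_iff₀' hc]
  linarith [hE0 T hT]

theorem ENNReal.ofReal_mul_setLIntegral_le {Ω : Type*} [MeasurableSpace Ω] {μ : Measure Ω}
    {s : Set Ω} {v w : Ω → ℝ} {a c K : ℝ} (ha : 0 ≤ a) (hc : 0 ≤ c) (hs : MeasurableSet s)
    (hvw : ∀ t ∈ s, c * v t ≤ a * w t)
    (hw : ∫⁻ t in s, ENNReal.ofReal (w t) ∂μ ≤ ENNReal.ofReal K) :
    ENNReal.ofReal c * ∫⁻ t in s, ENNReal.ofReal (v t) ∂μ ≤ ENNReal.ofReal (a * K) :=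
  calc ENNReal.ofReal c * ∫⁻ t in s, ENNReal.ofReal (v t) ∂μ
      = ∫⁻ t in s, ENNReal.ofReal (c * v t) ∂μ := by
        rw [← lintegral_const_mul' _ _ ENNReal.ofReal_ne_top]
        simp_rw [ENNReal.ofReal_mul hc]
    _ ≤ ∫⁻ t in s, ENNReal.ofReal a * ENNReal.ofReal (w t) ∂μ :=
        setLIntegral_mono' hs fun t ht => by
          rw [← ENNReal.ofReal_mul ha]
          exact ENNReal.ofReal_le_ofReal (hvw t ht)
    _ = ENNReal.ofReal a * ∫⁻ t in s, ENNReal.ofReal (w t) ∂μ :=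
        lintegral_const_mul' _ _ ENNReal.ofReal_ne_top
    _ ≤ ENNReal.ofReal a * ENNReal.ofReal K := by gcongr
    _ = ENNReal.ofReal (a * K) := (ENNReal.ofReal_mul ha).symm

section PrimalDual

variable {X Y : Type*} [NormedAddCommGroup X] [InnerProductSpace ℝ X] [CompleteSpace X]
  [NormedAddCommGroup Y] [InnerProductSpace ℝ Y] {f : X → ℝ} {A : X →L[ℝ] Y} {b : Y}
  {α β θ : ℝ} {x x' : ℝ → X} {l l' : ℝ → Y} {g a : X} {c : Y} {t : ℝ}

noncomputable def pdDissipation (f : X → ℝ) (A : X →L[ℝ] Y) (b : Y) (α β θ : ℝ)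
    (x x' : ℝ → X) (l l' : ℝ → Y) (z : X) (μ : Y) (t : ℝ) : ℝ :=
  (1 - 2 * θ) * ((f (x t) + ⟪μ, A (x t) - b⟫) - (f z + ⟪l t, A z - b⟫))
    + (1 - θ) * β * ‖A (x t) - b‖ ^ 2 + (θ * α - θ - 1) * (‖x' t‖ ^ 2 + ‖l' t‖ ^ 2)

theorem hasDerivAt_pdEnergy (hf : HasGradientAt f g (x t)) (hx : HasDerivAt x (x' t) t)
    (hx' : HasDerivAt x' a t) (hl : HasDerivAt l (l' t) t) (hl' : HasDerivAt l' c t)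
    (z : X) (μ : Y) :
    HasDerivAt (pdEnergy f A b α β θ x x' l l' z μ)
      (2 * θ ^ 2 * t * (augLagrangian f A b β (x t) μ - augLagrangian f A b β z (l t))
        + θ ^ 2 * t ^ 2 * (⟪g, x' t⟫ + ⟪μ + β • (A (x t) - b), A (x' t)⟫ - ⟪l' t, A z - b⟫)
        + ⟪x t - z + (θ * t) • x' t, (1 + θ) • x' t + (θ * t) • a⟫
        + ⟪l t - μ + (θ * t) • l' t, (1 + θ) • l' t + (θ * t) • c⟫
        + (θ * α - θ - 1) * (⟪x t - z, x' t⟫ + ⟪l t - μ, l' t⟫)) t := by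
  have hAx : HasDerivAt (fun s => A (x s) - b) (A (x' t)) t :=
    (A.hasFDerivAt.comp_hasDerivAt t hx).sub_const b
  have hgap : HasDerivAt
      (fun s => augLagrangian f A b β (x s) μ - augLagrangian f A b β z (l s))
      (⟪g, x' t⟫ + ⟪μ + β • (A (x t) - b), A (x' t)⟫ - ⟪l' t, A z - b⟫) t := by
    have := (((hf.comp_hasDerivAt hx).add ((hasDerivAt_const t μ).inner ℝ hAx)).add
      (hAx.norm_sq.const_mul (β / 2))).sub
      ((hl.inner ℝ (hasDerivAt_const t (A z - b))).const_add (f z) |>.add_const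
        (β / 2 * ‖A z - b‖ ^ 2))
    refine this.congr_deriv ?_
    simp only [inner_add_right, real_inner_smul_right, inner_zero_left, inner_zero_right,
      real_inner_comm (A (x' t))]
    ring
  have hp : HasDerivAt (fun s => x s - z + (θ * s) • x' s) ((1 + θ) • x' t + (θ * t) • a) t := by
    refine ((hx.sub_const z).add (((hasDerivAt_id t).const_mul θ).smul hx')).congr_deriv ?_
    simp only [id, mul_one]
    module
  have hq : HasDerivAt (fun s => l s - μ + (θ * s) • l' s) ((1 + θ) • l' t + (θ * t) • c) t := by
    refine ((hl.sub_const μ).add (((hasDerivAt_id t).const_mul θ).smul hl')).congr_deriv ?_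
    simp only [id, mul_one]
    module
  have := ((((hasDerivAt_pow 2 t).const_mul (θ ^ 2)).mul hgap).add
    ((hp.norm_sq.add hq.norm_sq).const_mul (1 / 2))).add
    ((((hx.sub_const z).norm_sq).add ((hl.sub_const μ).norm_sq)).const_mul
      ((θ * α - θ - 1) / 2))
  refine this.congr_deriv ?_
  norm_num
  ring

variable [CompleteSpace Y] {f' : X → X}

theorem hasDerivAt_pdEnergy_of_ode (hf : HasGradientAt f (f' (x t)) (x t))
    (hx : HasDerivAt x (x' t) t) (hx' : HasDerivAt x' a t) (hl : HasDerivAt l (l' t) t)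
    (hl' : HasDerivAt l' c t) (ht : t ≠ 0)
    (hode₁ : a + (α / t) • x' t + f' (x t) + A.adjoint (l t + (θ * t) • l' t)
      + β • A.adjoint (A (x t) - b) = 0)
    (hode₂ : c + (α / t) • l' t - (A (x t + (θ * t) • x' t) - b) = 0)
    {z : X} (hz : A z = b) (μ : Y) :
    HasDerivAt (pdEnergy f A b α β θ x x' l l' z μ)
      (θ * t * (f (x t) + ⟪f' (x t), z - x t⟫ - f z)
        - θ * t * pdDissipation f A b α β θ x x' l l' z μ t) t := by
  have ha : (θ * t) • a = -(θ * α) • x' t - (θ * t) • (f' (x t)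
      + A.adjoint (l t + (θ * t) • l' t) + β • A.adjoint (A (x t) - b)) := by
    linear_combination (norm := match_scalars) (θ * t) • hode₁ <;> field_simp <;> ring
  have hc : (θ * t) • c = -(θ * α) • l' t + (θ * t) • (A (x t + (θ * t) • x' t) - b) := by
    linear_combination (norm := match_scalars) (θ * t) • hode₂ <;> field_simp <;> ring
  refine (hasDerivAt_pdEnergy hf hx hx' hl hl' z μ).congr_deriv ?_
  simp only [inner_add_right, ha, hc]
  simp only [pdDissipation, augLagrangian, hz, sub_self, map_add, map_sub, _root_.map_smul,
    inner_add_left, inner_add_right, inner_sub_left, inner_sub_right,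
    inner_zero_right, real_inner_smul_left, real_inner_smul_right,
    ContinuousLinearMap.adjoint_inner_right,
    norm_sub_sq_real, real_inner_self_eq_norm_sq, real_inner_comm, norm_zero]
  ring

theorem deriv_pdEnergy_le_of_ode (hf : ConvexOn ℝ univ f)
    (hgrad : ∀ u, HasGradientAt f (f' u) u)
    (hx : HasDerivAt x (x' t) t) (hx' : HasDerivAt x' a t) (hl : HasDerivAt l (l' t) t)
    (hl' : HasDerivAt l' c t) (hθ : 0 ≤ θ) (ht : 0 < t)
    (hode₁ : a + (α / t) • x' t + f' (x t) + A.adjoint (l t + (θ * t) • l' t)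
      + β • A.adjoint (A (x t) - b) = 0)
    (hode₂ : c + (α / t) • l' t - (A (x t + (θ * t) • x' t) - b) = 0)
    {z : X} (hz : A z = b) (μ : Y) :
    deriv (pdEnergy f A b α β θ x x' l l' z μ) t
      ≤ -(θ * t) * pdDissipation f A b α β θ x x' l l' z μ t := by
  rw [(hasDerivAt_pdEnergy_of_ode (hgrad _) hx hx' hl hl' ht.ne' hode₁ hode₂ hz μ).deriv]
  have hfirst := hf.add_inner_le_of_hasGradientAt (hgrad (x t)) z
  nlinarith [mul_nonneg hθ ht.le]

theorem lagrangian_gap_nonneg (hf : ConvexOn ℝ univ f) {z : X} {μ : Y}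
    (hgrad : HasGradientAt f (f' z) z) (hopt₁ : f' z + A.adjoint μ = 0) (hopt₂ : A z = b)
    (u : X) (ν : Y) :
    0 ≤ (f u + ⟪μ, A u - b⟫) - (f z + ⟪ν, A z - b⟫) := by
  have hfirst := hf.add_inner_le_of_hasGradientAt hgrad u
  rw [eq_neg_of_add_eq_zero_left hopt₁, inner_neg_left,
    ContinuousLinearMap.adjoint_inner_left, map_sub, hopt₂] at hfirst
  rw [hopt₂, sub_self, inner_zero_right]
  linarith

theorem pdEnergy_nonneg (hf : ConvexOn ℝ univ f) {z : X} {μ : Y}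
    (hgrad : HasGradientAt f (f' z) z) (hopt₁ : f' z + A.adjoint μ = 0) (hopt₂ : A z = b)
    (hβ : 0 ≤ β) (hξ : 0 ≤ θ * α - θ - 1) (t : ℝ) :
    0 ≤ pdEnergy f A b α β θ x x' l l' z μ t := by
  have hL : 0 ≤ augLagrangian f A b β (x t) μ - augLagrangian f A b β z (l t) := by
    have hgap := lagrangian_gap_nonneg hf hgrad hopt₁ hopt₂ (x t) (l t)
    have hpen : 0 ≤ β / 2 * ‖A (x t) - b‖ ^ 2 := by positivity
    simp only [augLagrangian, hopt₂, sub_self, norm_zero] at hgap ⊢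
    linarith
  unfold pdEnergy
  have := mul_nonneg (mul_nonneg (sq_nonneg θ) (sq_nonneg t)) hL
  have := mul_nonneg (div_nonneg hξ zero_le_two)
    (add_nonneg (sq_nonneg ‖x t - z‖) (sq_nonneg ‖l t - μ‖))
  positivity

theorem le_pdDissipation (hf : ConvexOn ℝ univ f) {z : X} {μ : Y}
    (hgrad : HasGradientAt f (f' z) z) (hopt₁ : f' z + A.adjoint μ = 0) (hopt₂ : A z = b)
    (hβ : 0 ≤ β) (hθ : θ ≤ 1 / 2) (hξ : 0 ≤ θ * α - θ - 1) (t : ℝ) :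
    β / 2 * ‖A (x t) - b‖ ^ 2 ≤ pdDissipation f A b α β θ x x' l l' z μ t ∧
    (1 - 2 * θ) * ((f (x t) + ⟪μ, A (x t) - b⟫) - (f z + ⟪l t, A z - b⟫))
      ≤ pdDissipation f A b α β θ x x' l l' z μ t ∧
    (θ * α - θ - 1) * (‖x' t‖ ^ 2 + ‖l' t‖ ^ 2) ≤ pdDissipation f A b α β θ x x' l l' z μ t := by
  have hgap := mul_nonneg (by linarith : (0 : ℝ) ≤ 1 - 2 * θ)
    (lagrangian_gap_nonneg hf hgrad hopt₁ hopt₂ (x t) (l t))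
  have hpen := mul_nonneg (mul_nonneg (by linarith : (0 : ℝ) ≤ 1 / 2 - θ) hβ)
    (sq_nonneg ‖A (x t) - b‖)
  have hkin := mul_nonneg hξ (add_nonneg (sq_nonneg ‖x' t‖) (sq_nonneg ‖l' t‖))
  unfold pdDissipation
  refine ⟨?_, ?_, ?_⟩ <;> nlinarith

theorem lintegral_mul_pdDissipation_le {t₀ : ℝ} {x'' : ℝ → X} {l'' : ℝ → Y}
    (hf : ConvexOn ℝ univ f) (hgrad : ∀ u, HasGradientAt f (f' u) u) (ht₀ : 0 < t₀)
    (hβ : 0 ≤ β) (hθ : 0 < θ) (hθ' : θ ≤ 1 / 2) (hξ : 0 ≤ θ * α - θ - 1)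
    (hx : ∀ t ∈ Ici t₀, HasDerivAt x (x' t) t) (hx' : ∀ t ∈ Ici t₀, HasDerivAt x' (x'' t) t)
    (hl : ∀ t ∈ Ici t₀, HasDerivAt l (l' t) t) (hl' : ∀ t ∈ Ici t₀, HasDerivAt l' (l'' t) t)
    (hode₁ : ∀ t ∈ Ici t₀, x'' t + (α / t) • x' t + f' (x t)
      + A.adjoint (l t + (θ * t) • l' t) + β • A.adjoint (A (x t) - b) = 0)
    (hode₂ : ∀ t ∈ Ici t₀, l'' t + (α / t) • l' t - (A (x t + (θ * t) • x' t) - b) = 0)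
    {z : X} {μ : Y} (hopt₁ : f' z + A.adjoint μ = 0) (hopt₂ : A z = b) :
    ∫⁻ t in Ioi t₀, ENNReal.ofReal (t * pdDissipation f A b α β θ x x' l l' z μ t)
      ≤ ENNReal.ofReal (pdEnergy f A b α β θ x x' l l' z μ t₀ / θ) := by
  have hcont : ContinuousOn (fun t => t * pdDissipation f A b α β θ x x' l l' z μ t) (Ici t₀) := by
    have hxc : ContinuousOn x (Ici t₀) := fun t ht => (hx t ht).continuousAt.continuousWithinAt
    have hx'c : ContinuousOn x' (Ici t₀) := fun t ht =>
      (hx' t ht).continuousAt.continuousWithinAt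
    have hlc : ContinuousOn l (Ici t₀) := fun t ht => (hl t ht).continuousAt.continuousWithinAt
    have hl'c : ContinuousOn l' (Ici t₀) := fun t ht =>
      (hl' t ht).continuousAt.continuousWithinAt
    have hfc : Continuous f := continuous_iff_continuousAt.2 fun u => (hgrad u).continuousAt
    unfold pdDissipation
    fun_prop
  refine lintegral_Ioi_le_of_deriv_le_neg hθ
    (fun t ht => (hasDerivAt_pdEnergy (hgrad _) (hx t ht) (hx' t ht) (hl t ht) (hl' t ht)
      z μ).differentiableAt)
    (fun t _ => pdEnergy_nonneg hf (hgrad z) hopt₁ hopt₂ hβ hξ t) hcont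
    (fun t ht => mul_nonneg (ht₀.le.trans ht) ((mul_nonneg hξ (by positivity)).trans
      (le_pdDissipation hf (hgrad z) hopt₁ hopt₂ hβ hθ' hξ t).2.2))
    (fun t ht => ?_)
  have ht' : t ∈ Ici t₀ := Ioi_subset_Ici_self ht
  have := deriv_pdEnergy_le_of_ode hf hgrad (hx t ht') (hx' t ht') (hl t ht') (hl' t ht')
    hθ.le (ht₀.trans ht) (hode₁ t ht') (hode₂ t ht') hopt₂ μ
  linarith

end PrimalDual

theorem stmt1_general
    {X Y : Type*}
    [NormedAddCommGroup X] [InnerProductSpace ℝ X] [CompleteSpace X]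
    [NormedAddCommGroup Y] [InnerProductSpace ℝ Y] [CompleteSpace Y]
    (f : X → ℝ) (f' : X → X) (A : X →L[ℝ] Y) (b : Y)
    (hconv : ConvexOn ℝ univ f)
    (hgrad : ∀ u, HasGradientAt f (f' u) u)
    (t₀ α β θ : ℝ) (ht₀ : 0 < t₀) (hα : 3 ≤ α) (hβ : 0 ≤ β)
    (hθ1 : 1 / (α - 1) ≤ θ) (hθ2 : θ ≤ 1 / 2)
    (x : ℝ → X) (x' x'' : ℝ → X) (l : ℝ → Y) (l' l'' : ℝ → Y)
    (hx1 : ∀ t ∈ Ici t₀, HasDerivAt x (x' t) t)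
    (hx2 : ∀ t ∈ Ici t₀, HasDerivAt x' (x'' t) t)
    (hl1 : ∀ t ∈ Ici t₀, HasDerivAt l (l' t) t)
    (hl2 : ∀ t ∈ Ici t₀, HasDerivAt l' (l'' t) t)
    (hode1 : ∀ t ∈ Ici t₀, x'' t + (α / t) • x' t + f' (x t)
        + (ContinuousLinearMap.adjoint A) (l t + (θ * t) • l' t)
        + β • (ContinuousLinearMap.adjoint A) (A (x t) - b) = 0)
    (hode2 : ∀ t ∈ Ici t₀, l'' t + (α / t) • l' t
        - (A (x t + (θ * t) • x' t) - b) = 0)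
    (xs : X) (ls : Y)
    (hopt1 : f' xs + (ContinuousLinearMap.adjoint A) ls = 0)
    (hopt2 : A xs = b)
    :
    ENNReal.ofReal β *
        (∫⁻ t in Ioi t₀, ENNReal.ofReal (t * ‖A (x t) - b‖ ^ 2))
      ≤ ENNReal.ofReal (2 * pdEnergy f A b α β θ x x' l l' xs ls t₀ / θ) ∧
    ENNReal.ofReal (1 - 2 * θ) *
        (∫⁻ t in Ioi t₀, ENNReal.ofReal
          (t * ((f (x t) + ⟪ls, A (x t) - b⟫) - (f xs + ⟪l t, A xs - b⟫))))
      ≤ ENNReal.ofReal (pdEnergy f A b α β θ x x' l l' xs ls t₀ / θ) ∧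
    ENNReal.ofReal (θ * α - θ - 1) *
        (∫⁻ t in Ioi t₀, ENNReal.ofReal (t * (‖x' t‖ ^ 2 + ‖l' t‖ ^ 2)))
      ≤ ENNReal.ofReal (pdEnergy f A b α β θ x x' l l' xs ls t₀ / θ) := by
  have hθ : 0 < θ := (one_div_pos.2 (by linarith)).trans_le hθ1
  have hξ : 0 ≤ θ * α - θ - 1 := by
    have := (div_le_iff₀ (by linarith : (0 : ℝ) < α - 1)).1 hθ1
    linarith
  have hint := lintegral_mul_pdDissipation_le hconv hgrad ht₀ hβ hθ hθ2 hξ hx1 hx2 hl1 hl2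
    hode1 hode2 hopt1 hopt2
  have hD := le_pdDissipation (x := x) (x' := x') (l := l) (l' := l') hconv (hgrad xs) hopt1
    hopt2 hβ hθ2 hξ
  set D := pdDissipation f A b α β θ x x' l l' xs ls
  have hmul {c a : ℝ} {v : ℝ → ℝ} (hv : ∀ t, c * v t ≤ a * D t) :
      ∀ t ∈ Ioi t₀, c * (t * v t) ≤ a * (t * D t) :=
    fun t ht => by nlinarith [mul_le_mul_of_nonneg_left (hv t) (ht₀.trans ht).le]
  refine ⟨?_, ?_, ?_⟩
  · rw [mul_div_assoc]
    exact ENNReal.ofReal_mul_setLIntegral_le zero_le_two hβ measurableSet_Ioi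
      (hmul fun t => by linarith [(hD t).1]) hint
  · simpa only [one_mul] using ENNReal.ofReal_mul_setLIntegral_le zero_le_one
      (by linarith) measurableSet_Ioi (hmul fun t => by linarith [(hD t).2.1]) hint
  · simpa only [one_mul] using ENNReal.ofReal_mul_setLIntegral_le zero_le_one
      hξ measurableSet_Ioi (hmul fun t => by linarith [(hD t).2.2]) hint

theorem stmt1
    {X Y : Type*}
    [NormedAddCommGroup X] [InnerProductSpace ℝ X] [CompleteSpace X]
    [NormedAddCommGroup Y] [InnerProductSpace ℝ Y] [CompleteSpace Y]
    (f : X → ℝ) (f' : X → X) (A : X →L[ℝ] Y) (b : Y)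
    (hconv : ConvexOn ℝ univ f)
    (hgrad : ∀ u, HasGradientAt f (f' u) u)
    (hf'cont : Continuous f')
    (t₀ α β θ : ℝ) (ht₀ : 0 < t₀) (hα : 3 ≤ α) (hβ : 0 ≤ β)
    (hθ1 : 1 / (α - 1) ≤ θ) (hθ2 : θ ≤ 1 / 2)
    (x : ℝ → X) (x' x'' : ℝ → X) (l : ℝ → Y) (l' l'' : ℝ → Y)
    (hx1 : ∀ t ∈ Ici t₀, HasDerivAt x (x' t) t)
    (hx2 : ∀ t ∈ Ici t₀, HasDerivAt x' (x'' t) t)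
    (hx3 : ContinuousOn x'' (Ici t₀))
    (hl1 : ∀ t ∈ Ici t₀, HasDerivAt l (l' t) t)
    (hl2 : ∀ t ∈ Ici t₀, HasDerivAt l' (l'' t) t)
    (hl3 : ContinuousOn l'' (Ici t₀))
    (hode1 : ∀ t ∈ Ici t₀, x'' t + (α / t) • x' t + f' (x t)
        + (ContinuousLinearMap.adjoint A) (l t + (θ * t) • l' t)
        + β • (ContinuousLinearMap.adjoint A) (A (x t) - b) = 0)
    (hode2 : ∀ t ∈ Ici t₀, l'' t + (α / t) • l' t
        - (A (x t + (θ * t) • x' t) - b) = 0)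
    (xs : X) (ls : Y)
    (hopt1 : f' xs + (ContinuousLinearMap.adjoint A) ls = 0)
    (hopt2 : A xs = b)
    :
    ENNReal.ofReal β *
        (∫⁻ t in Ioi t₀, ENNReal.ofReal (t * ‖A (x t) - b‖ ^ 2))
      ≤ ENNReal.ofReal (2 * pdEnergy f A b α β θ x x' l l' xs ls t₀ / θ) ∧
    ENNReal.ofReal (1 - 2 * θ) *
        (∫⁻ t in Ioi t₀, ENNReal.ofReal
          (t * ((f (x t) + ⟪ls, A (x t) - b⟫) - (f xs + ⟪l t, A xs - b⟫))))
      ≤ ENNReal.ofReal (pdEnergy f A b α β θ x x' l l' xs ls t₀ / θ) ∧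
    ENNReal.ofReal (θ * α - θ - 1) *
        (∫⁻ t in Ioi t₀, ENNReal.ofReal (t * (‖x' t‖ ^ 2 + ‖l' t‖ ^ 2)))
      ≤ ENNReal.ofReal (pdEnergy f A b α β θ x x' l l' xs ls t₀ / θ) :=
  stmt1_general f f' A b hconv hgrad t₀ α β θ ht₀ hα hβ hθ1 hθ2 x x' x'' l l' l'' hx1 hx2 hl1 hl2
    hode1 hode2 xs ls hopt1 hopt2
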